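/- arXiv:2203.02943 — 3 statements merged into one kernel-verified Lean document; each statement's English description precedes it below -/
import Mathlib

section
/- Let H ∈ (0,1/2) and α ∈ (−1/2−H, 1/2−H). Then there exists a constant C > 0 such that for every positive integer n, ∫₀¹ ∫₀ᵗ (t−s)^α |k_n(s,t)| ds dt ≤ C · n^{−α−H−1/2}, where k_n(s,t) = (t−s)^{H−1/2} − (⌊nt⌋/n − s)_+^{H−1/2}. -/
/-!
Put `β = H - 1/2 ∈ (-1, 0)`, `γ = α + β ∈ (-1, 0)` and, for fixed `t`, `u = ⌊nt⌋/n`,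
`d = t - u ∈ [0, 1/n]`. The inner integral is at most `C d^(γ+1)`, so integrating over `t`
gives `C n^(-γ-1)`. For the inner bound split the range of `s` at `u - d` and `u`:
on `[u, t)` the second term of the kernel vanishes and the integrand is `(t-s)^γ`;
on `[u-d, u)` it is at most `2 d^α (u-s)^β`; for `s < u - d` the mean value bound
`x^β - (x+d)^β ≤ -β d x^(β-1)` makes it at most `-2β d (u-s)^(γ-1)`, which is integrable
down to `-∞` because `γ < 0`. Each piece contributes a constant times `d^(γ+1)`.
-/

open MeasureTheory Real Set

/-- Truncated power: `(x)_+^β = x^β` if `x > 0`, else `0`. -/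
noncomputable def posPow (x β : ℝ) : ℝ := if 0 < x then x ^ β else 0

/-- The discretization kernel `k_n(s,t) = (t-s)^{H-1/2} - (⌊nt⌋/n - s)_+^{H-1/2}`. -/
noncomputable def kn (H : ℝ) (n : ℕ) (s t : ℝ) : ℝ :=
  (t - s) ^ (H - 1/2) - posPow ((⌊(n : ℝ) * t⌋ : ℝ) / n - s) (H - 1/2)

theorem posPow_of_pos {x : ℝ} (β : ℝ) (hx : 0 < x) : posPow x β = x ^ β := if_pos hx

theorem posPow_of_nonpos {x : ℝ} (β : ℝ) (hx : x ≤ 0) : posPow x β = 0 := if_neg hx.not_gt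

theorem posPow_of_nonneg {x β : ℝ} (hβ : β ≠ 0) (hx : 0 ≤ x) : posPow x β = x ^ β := by
  rcases hx.lt_or_eq with hx | rfl
  · exact posPow_of_pos β hx
  · rw [posPow_of_nonpos β le_rfl, zero_rpow hβ]

theorem floor_mul_div_le_and_sub_le {c : ℝ} (hc : 0 < c) (t : ℝ) :
    (⌊c * t⌋ : ℝ) / c ≤ t ∧ t - (⌊c * t⌋ : ℝ) / c ≤ c⁻¹ := by
  constructor
  · rw [div_le_iff₀ hc, mul_comm t]
    exact Int.floor_le _
  · have := Int.lt_floor_add_one (c * t)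
    rw [sub_le_iff_le_add, inv_eq_one_div, ← add_div, le_div_iff₀ hc]
    linarith

theorem lintegral_Ico_mul_rpow_sub {a b c p : ℝ} {K : ℝ} (hK : 0 ≤ K) (hab : a ≤ b)
    (hbc : b ≤ c) (hp : -1 < p ∨ (p ≠ -1 ∧ b < c)) :
    ∫⁻ s in Ico a b, ENNReal.ofReal (K * (c - s) ^ p)
      = ENNReal.ofReal (K * (((c - a) ^ (p + 1) - (c - b) ^ (p + 1)) / (p + 1))) := by
  have hp' : -1 < p ∨ p ≠ -1 ∧ (0 : ℝ) ∉ uIcc (c - b) (c - a) := by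
    refine hp.imp_right fun ⟨hp, hbc⟩ => ⟨hp, ?_⟩
    rw [uIcc_of_le (by linarith)]
    exact fun h => by linarith [h.1]
  have hint : IntervalIntegrable (fun s => (c - s) ^ p) volume a b := by
    have hpow : IntervalIntegrable (fun y : ℝ => y ^ p) volume (c - b) (c - a) := by
      rcases hp' with hp' | ⟨-, h0⟩
      · exact intervalIntegral.intervalIntegrable_rpow' hp'
      · exact intervalIntegral.intervalIntegrable_rpow (Or.inr h0)
    simpa using (hpow.comp_sub_left c).symm
  have hnonneg : 0 ≤ᵐ[volume.restrict (Ioc a b)] fun s => K * (c - s) ^ p := by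
    refine (ae_restrict_iff' measurableSet_Ioc).2 (.of_forall fun s hs => ?_)
    exact mul_nonneg hK (rpow_nonneg (by linarith [hs.2]) p)
  rw [setLIntegral_congr Ico_ae_eq_Ioc,
    ← ofReal_integral_eq_lintegral_ofReal (hint.1.const_mul K) hnonneg,
    ← intervalIntegral.integral_of_le hab, intervalIntegral.integral_const_mul,
    intervalIntegral.integral_comp_sub_left (fun y => y ^ p) c, integral_rpow hp']

theorem rpow_sub_rpow_add_le {β x δ : ℝ} (hβ : β < 0) (hx : 0 < x) (hδ : 0 ≤ δ) :
    x ^ β - (x + δ) ^ β ≤ -β * δ * x ^ (β - 1) := by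
  have h0 : (0 : ℝ) ∉ uIcc x (x + δ) := by
    rw [uIcc_of_le (by linarith)]
    exact fun h => by linarith [h.1]
  have hderiv : ∫ y in x..(x + δ), y ^ (β - 1) = ((x + δ) ^ β - x ^ β) / β := by
    rw [integral_rpow (Or.inr ⟨by linarith, h0⟩), sub_add_cancel]
  have hmono : ∫ y in x..(x + δ), y ^ (β - 1) ≤ ∫ _ in x..(x + δ), x ^ (β - 1) :=
    intervalIntegral.integral_mono_on (by linarith)
      (intervalIntegral.intervalIntegrable_rpow (Or.inr h0)) intervalIntegrable_const
      fun y hy => rpow_le_rpow_of_nonpos hx hy.1 (by linarith)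
  rw [hderiv, intervalIntegral.integral_const, smul_eq_mul, add_sub_cancel_left,
    div_le_iff_of_neg hβ] at hmono
  linarith

theorem rpow_le_two_mul_rpow {α x y : ℝ} (hα : α ≤ 1) (hx : 0 < x) (hxy : x ≤ y)
    (hy : y ≤ 2 * x) : y ^ α ≤ 2 * x ^ α := by
  have hxα : 0 < x ^ α := rpow_pos_of_pos hx α
  rcases le_or_gt α 0 with hα0 | hα0
  · linarith [rpow_le_rpow_of_nonpos hx hxy hα0]
  · calc y ^ α ≤ (2 * x) ^ α := rpow_le_rpow (by linarith) hy hα0.le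
      _ = 2 ^ α * x ^ α := mul_rpow zero_le_two hx.le
      _ ≤ 2 ^ (1 : ℝ) * x ^ α := by gcongr; exact one_le_two
      _ = 2 * x ^ α := by rw [rpow_one]

section LagBounds

variable {α β x d : ℝ}

theorem rpow_add_mul_abs_rpow_add_sub_le_of_le (hα : α ≤ 1) (hβ : β < 0) (hx : 0 < x)
    (hxd : x ≤ d) : (x + d) ^ α * |(x + d) ^ β - x ^ β| ≤ 2 * d ^ α * x ^ β := by
  have hmono : (x + d) ^ β ≤ x ^ β := rpow_le_rpow_of_nonpos hx (by linarith) hβ.le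
  have habs : |(x + d) ^ β - x ^ β| ≤ x ^ β := by
    rw [abs_sub_comm, abs_of_nonneg (sub_nonneg.2 hmono)]
    linarith [rpow_nonneg (by linarith : 0 ≤ x + d) β]
  exact mul_le_mul (rpow_le_two_mul_rpow hα (by linarith) (by linarith) (by linarith)) habs
    (abs_nonneg _) (mul_nonneg zero_le_two (rpow_nonneg (by linarith) α))

theorem rpow_add_mul_abs_rpow_add_sub_le_of_ge (hα : α ≤ 1) (hβ : β < 0) (hd : 0 ≤ d)
    (hdx : d ≤ x) (hx : 0 < x) :
    (x + d) ^ α * |(x + d) ^ β - x ^ β| ≤ 2 * -β * d * x ^ (α + β - 1) := by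
  have hmono : (x + d) ^ β ≤ x ^ β := rpow_le_rpow_of_nonpos hx (by linarith) hβ.le
  calc (x + d) ^ α * |(x + d) ^ β - x ^ β|
      ≤ (2 * x ^ α) * (-β * d * x ^ (β - 1)) := by
        rw [abs_sub_comm, abs_of_nonneg (sub_nonneg.2 hmono)]
        exact mul_le_mul (rpow_le_two_mul_rpow hα hx (by linarith) (by linarith))
          (rpow_sub_rpow_add_le hβ hx hd) (sub_nonneg.2 hmono) (by positivity)
    _ = 2 * -β * d * x ^ (α + β - 1) := by
        rw [add_sub_assoc, rpow_add hx]
        ring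

end LagBounds

section KernelIntegral

variable {α β t u : ℝ}

theorem lintegral_Ico_kernel_right (hγ : -1 < α + β) (hut : u ≤ t) :
    ∫⁻ s in Ico u t, ENNReal.ofReal ((t - s) ^ α * |(t - s) ^ β - posPow (u - s) β|)
      = ENNReal.ofReal (1 / (α + β + 1) * (t - u) ^ (α + β + 1)) := by
  calc _ = ∫⁻ s in Ico u t, ENNReal.ofReal (1 * (t - s) ^ (α + β)) := by
        refine setLIntegral_congr_fun measurableSet_Ico fun s hs => ?_
        have hts : 0 < t - s := by linarith [hs.2]
        rw [posPow_of_nonpos β (by linarith [hs.1]), sub_zero,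
          abs_of_pos (rpow_pos_of_pos hts β), one_mul, rpow_add hts]
    _ = _ := by
        rw [lintegral_Ico_mul_rpow_sub zero_le_one hut le_rfl (Or.inl hγ), sub_self,
          zero_rpow (by linarith), sub_zero, one_mul, one_div_mul_eq_div]

theorem lintegral_Ico_kernel_middle (hα : α ≤ 1) (hβ : -1 < β) (hβ0 : β < 0) (hut : u < t) :
    ∫⁻ s in Ico (2 * u - t) u,
        ENNReal.ofReal ((t - s) ^ α * |(t - s) ^ β - posPow (u - s) β|)
      ≤ ENNReal.ofReal (2 / (β + 1) * (t - u) ^ (α + β + 1)) := by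
  have hd : 0 < t - u := by linarith
  calc _ ≤ ∫⁻ s in Ico (2 * u - t) u, ENNReal.ofReal (2 * (t - u) ^ α * (u - s) ^ β) := by
        refine setLIntegral_mono' measurableSet_Ico fun s hs => ENNReal.ofReal_le_ofReal ?_
        have hus : 0 < u - s := by linarith [hs.2]
        have := rpow_add_mul_abs_rpow_add_sub_le_of_le hα hβ0 hus (d := t - u)
          (by linarith [hs.1])
        rw [posPow_of_pos β hus]
        rwa [sub_add_sub_cancel'] at this
    _ = ENNReal.ofReal (2 * (t - u) ^ α
          * (((u - (2 * u - t)) ^ (β + 1) - (u - u) ^ (β + 1)) / (β + 1))) :=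
        lintegral_Ico_mul_rpow_sub (by positivity) (by linarith) le_rfl (Or.inl hβ)
    _ = _ := by
        rw [show u - (2 * u - t) = t - u by ring, sub_self, zero_rpow (by linarith), sub_zero,
          show α + β + 1 = α + (β + 1) by ring, rpow_add hd α (β + 1)]
        congr 1
        ring

theorem lintegral_Ico_kernel_left (hα : α ≤ 1) (hβ0 : β < 0) (hγ0 : α + β < 0) {a : ℝ}
    (ha : a ≤ 2 * u - t) (hut : u < t) :
    ∫⁻ s in Ico a (2 * u - t),
        ENNReal.ofReal ((t - s) ^ α * |(t - s) ^ β - posPow (u - s) β|)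
      ≤ ENNReal.ofReal (2 * β / (α + β) * (t - u) ^ (α + β + 1)) := by
  have hd : 0 < t - u := by linarith
  have hK : 0 ≤ 2 * -β * (t - u) := mul_nonneg (by linarith) hd.le
  calc _ ≤ ∫⁻ s in Ico a (2 * u - t),
          ENNReal.ofReal (2 * -β * (t - u) * (u - s) ^ (α + β - 1)) := by
        refine setLIntegral_mono' measurableSet_Ico fun s hs => ENNReal.ofReal_le_ofReal ?_
        have hus : t - u < u - s := by linarith [hs.2]
        have := rpow_add_mul_abs_rpow_add_sub_le_of_ge hα hβ0 hd.le hus.le (hd.trans hus)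
        rw [posPow_of_pos β (hd.trans hus)]
        rwa [sub_add_sub_cancel'] at this
    _ = ENNReal.ofReal (2 * -β * (t - u) * (((u - a) ^ (α + β - 1 + 1)
          - (u - (2 * u - t)) ^ (α + β - 1 + 1)) / (α + β - 1 + 1))) :=
        lintegral_Ico_mul_rpow_sub hK ha (by linarith) (Or.inr ⟨by linarith, by linarith⟩)
    _ ≤ _ := by
        refine ENNReal.ofReal_le_ofReal ?_
        rw [sub_add_cancel, show u - (2 * u - t) = t - u by ring, rpow_add_one hd.ne']
        have hfar : 2 * -β * (t - u) * ((u - a) ^ (α + β) / (α + β)) ≤ 0 :=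
          mul_nonpos_of_nonneg_of_nonpos hK
            (div_nonpos_of_nonneg_of_nonpos (rpow_nonneg (by linarith) _) hγ0.le)
        calc _ = 2 * -β * (t - u) * ((u - a) ^ (α + β) / (α + β))
              + 2 * β / (α + β) * ((t - u) ^ (α + β) * (t - u)) := by ring
          _ ≤ _ := by linarith

end KernelIntegral

/-- One summand for each range of `s` in `lintegral_Ioc_kernel_le`: left, middle, right. -/
noncomputable def kernelConst (α β : ℝ) : ℝ := 2 * β / (α + β) + 2 / (β + 1) + 1 / (α + β + 1)

section KernelBound

variable {α β : ℝ}

theorem kernelConst_summands_pos (hβ : -1 < β) (hβ0 : β < 0) (hγ : -1 < α + β)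
    (hγ0 : α + β < 0) :
    0 < 2 * β / (α + β) ∧ 0 < 2 / (β + 1) ∧ 0 < 1 / (α + β + 1) :=
  ⟨div_pos_of_neg_of_neg (by linarith) hγ0, div_pos two_pos (by linarith),
    div_pos one_pos (by linarith)⟩

theorem kernelConst_pos (hβ : -1 < β) (hβ0 : β < 0) (hγ : -1 < α + β)
    (hγ0 : α + β < 0) :
    0 < kernelConst α β := by
  obtain ⟨h₁, h₂, h₃⟩ := kernelConst_summands_pos hβ hβ0 hγ hγ0
  unfold kernelConst
  linarith

theorem lintegral_Ioc_kernel_le (hβ : -1 < β) (hβ0 : β < 0) (hγ : -1 < α + β)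
    (hγ0 : α + β < 0) {a t u ε : ℝ} (hut : u ≤ t) (hε : t - u ≤ ε) :
    ∫⁻ s in Ioc a t, ENNReal.ofReal ((t - s) ^ α * |(t - s) ^ β - posPow (u - s) β|)
      ≤ ENNReal.ofReal (kernelConst α β * ε ^ (α + β + 1)) := by
  set F := fun s => ENNReal.ofReal ((t - s) ^ α * |(t - s) ^ β - posPow (u - s) β|)
  rcases hut.eq_or_lt with rfl | hut
  · calc ∫⁻ s in Ioc a u, F s = ∫⁻ _ in Ioc a u, 0 := by
          refine setLIntegral_congr_fun measurableSet_Ioc fun s hs => ?_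
          simp only [F, posPow_of_nonneg hβ0.ne (sub_nonneg.2 hs.2), sub_self, abs_zero,
            mul_zero, ENNReal.ofReal_zero]
      _ = 0 := lintegral_zero
      _ ≤ _ := zero_le
  have hα : α ≤ 1 := by linarith
  have hd : 0 < t - u := by linarith
  have hL : min a (2 * u - t) ≤ 2 * u - t := min_le_right _ _
  calc ∫⁻ s in Ioc a t, F s = ∫⁻ s in Ico a t, F s := (setLIntegral_congr Ico_ae_eq_Ioc).symm
    _ ≤ ∫⁻ s in Ico (min a (2 * u - t)) t, F s :=
        lintegral_mono_set (Ico_subset_Ico_left (min_le_left _ _))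
    _ = (∫⁻ s in Ico (min a (2 * u - t)) (2 * u - t), F s) + (∫⁻ s in Ico (2 * u - t) u, F s)
          + ∫⁻ s in Ico u t, F s := by
        rw [← Ico_union_Ico_eq_Ico (hL.trans (by linarith)) hut.le,
          lintegral_union measurableSet_Ico Ico_disjoint_Ico_same,
          ← Ico_union_Ico_eq_Ico hL (by linarith : 2 * u - t ≤ u),
          lintegral_union measurableSet_Ico Ico_disjoint_Ico_same]
    _ ≤ ENNReal.ofReal (2 * β / (α + β) * (t - u) ^ (α + β + 1))
          + ENNReal.ofReal (2 / (β + 1) * (t - u) ^ (α + β + 1))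
          + ENNReal.ofReal (1 / (α + β + 1) * (t - u) ^ (α + β + 1)) := by
        gcongr
        · exact lintegral_Ico_kernel_left hα hβ0 hγ0 hL hut
        · exact lintegral_Ico_kernel_middle hα hβ hβ0 hut
        · exact (lintegral_Ico_kernel_right hγ hut.le).le
    _ = ENNReal.ofReal (kernelConst α β * (t - u) ^ (α + β + 1)) := by
        obtain ⟨h₁, h₂, h₃⟩ := kernelConst_summands_pos hβ hβ0 hγ hγ0
        rw [← ENNReal.ofReal_add (by positivity) (by positivity),
          ← ENNReal.ofReal_add (by positivity) (by positivity), kernelConst, add_mul, add_mul]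
    _ ≤ ENNReal.ofReal (kernelConst α β * ε ^ (α + β + 1)) :=
        ENNReal.ofReal_le_ofReal <| mul_le_mul_of_nonneg_left
          (rpow_le_rpow hd.le hε (by linarith)) (kernelConst_pos hβ hβ0 hγ hγ0).le

end KernelBound

/-- First half of Lemma 1:
`∫₀¹∫₀ᵗ (t-s)^α |k_n(s,t)| ds dt ≤ C n^{-α-H-1/2}`. -/
theorem lemma1_first (H α : ℝ) (hH : H ∈ Ioo (0 : ℝ) (1/2))
    (hα : α ∈ Ioo (-(1/2) - H) (1/2 - H)) :
    ∃ C : ℝ, 0 < C ∧ ∀ n : ℕ, 0 < n →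
      (∫⁻ t in Ioc (0 : ℝ) 1, ∫⁻ s in Ioc (0 : ℝ) t,
          ENNReal.ofReal ((t - s) ^ α * |kn H n s t|))
        ≤ ENNReal.ofReal (C * (n : ℝ) ^ (-α - H - 1/2)) := by
  obtain ⟨hH0, hH1⟩ := hH
  obtain ⟨hα0, hα1⟩ := hα
  have hβ : -1 < H - 1/2 := by linarith
  have hβ0 : H - 1/2 < 0 := by linarith
  have hγ : -1 < α + (H - 1/2) := by linarith
  have hγ0 : α + (H - 1/2) < 0 := by linarith
  refine ⟨kernelConst α (H - 1/2), kernelConst_pos hβ hβ0 hγ hγ0, fun n hn => ?_⟩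
  have hn : (0 : ℝ) < n := Nat.cast_pos.2 hn
  calc _ ≤ ∫⁻ _ in Ioc (0 : ℝ) 1,
          ENNReal.ofReal (kernelConst α (H - 1/2) * (n : ℝ)⁻¹ ^ (α + (H - 1/2) + 1)) := by
        refine setLIntegral_mono' measurableSet_Ioc fun t _ => ?_
        obtain ⟨hut, hε⟩ := floor_mul_div_le_and_sub_le hn t
        exact lintegral_Ioc_kernel_le hβ hβ0 hγ hγ0 hut hε
    _ = ENNReal.ofReal (kernelConst α (H - 1/2) * (n : ℝ) ^ (-α - H - 1/2)) := by
        rw [setLIntegral_const, volume_Ioc, sub_zero, ENNReal.ofReal_one, mul_one,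
          inv_rpow hn.le, ← rpow_neg hn.le]
        congr 3
        ring
end

section
/- Let H ∈ (0,1/2) and α ∈ (−1/2−H, 1/2−H). Then there exists a constant C > 0 such that for every positive integer n, ∫₀¹ ∫₀ᵗ (⌊nt⌋/n − s)_+^α |k_n(s,t)| ds dt ≤ C · n^{−α−H−1/2}, where k_n(s,t) = (t−s)^{H−1/2} − (⌊nt⌋/n − s)_+^{H−1/2}. -/
/-! Write `r = ⌊nt⌋/n`, `δ = t - r ∈ [0, 1/n]`, `β = H - 1/2 < 0` and `u = r - s`. For `u > 0` the
inner integrand is `u^α (u^β - (u + δ)^β)`. Near the singularity (`u ≤ δ`) it is at most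
`u^(α+β)`; farther away the tangent line of the convex function `x ↦ x^β` bounds it by
`-β δ u^(α+β-1)`. As `-1 < α + β < 0`, both majorants are integrable in `u` over their ranges,
with integrals of order `δ^(α+β+1) ≤ n^(-α-H-1/2)`, uniformly in `t`. -/

open MeasureTheory Real Set

theorem one_add_mul_self_le_rpow_one_add_of_nonpos {s : ℝ} (hs : -1 < s) {p : ℝ} (hp : p ≤ 0) :
    1 + p * s ≤ (1 + s) ^ p := by
  have hs1 : 0 < 1 + s := by linarith
  have hlog : p * s ≤ p * log (1 + s) :=
    mul_le_mul_of_nonpos_left (by linarith [log_le_sub_one_of_pos hs1]) hp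
  rw [rpow_def_of_pos hs1, mul_comm (log _)]
  linarith [add_one_le_exp (p * log (1 + s))]

theorem rpow_sub_rpow_le_of_nonpos {a b β : ℝ} (ha : 0 < a) (hb : 0 < b) (hβ : β ≤ 0) :
    a ^ β - b ^ β ≤ -β * (b - a) * a ^ (β - 1) := by
  set s := (b - a) / a with hs_def
  have hb_eq : b = a * (1 + s) := by rw [hs_def]; field_simp; ring
  have hs : -1 < s := by
    rw [lt_div_iff₀ ha]; linarith
  have hbern := one_add_mul_self_le_rpow_one_add_of_nonpos hs hβ
  have hpow : b ^ β = a ^ β * (1 + s) ^ β := by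
    rw [hb_eq, mul_rpow ha.le (by linarith)]
  have htangent : -β * (b - a) * a ^ (β - 1) = a ^ β * (-β * s) := by
    rw [rpow_sub_one ha.ne', hs_def]; field_simp
  rw [hpow, htangent]
  nlinarith [rpow_pos_of_pos ha β]

theorem abs_rpow_sub_rpow_le_rpow {u w β : ℝ} (hu : 0 < u) (huw : u ≤ w) (hβ : β ≤ 0) :
    |w ^ β - u ^ β| ≤ u ^ β :=
  abs_sub_le_of_nonneg_of_le (rpow_nonneg (hu.le.trans huw) β) (rpow_le_rpow_of_nonpos hu huw hβ)
    (rpow_nonneg hu.le β) le_rfl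

theorem abs_rpow_sub_rpow_le_mul {u w β : ℝ} (hu : 0 < u) (huw : u ≤ w) (hβ : β ≤ 0) :
    |w ^ β - u ^ β| ≤ -β * (w - u) * u ^ (β - 1) := by
  rw [abs_of_nonpos (sub_nonpos.2 (rpow_le_rpow_of_nonpos hu huw hβ)), neg_sub]
  exact rpow_sub_rpow_le_of_nonpos hu (hu.trans_le huw) hβ

theorem lintegral_Ioc_rpow {p δ : ℝ} (hp : -1 < p) (hδ : 0 ≤ δ) :
    ∫⁻ u in Ioc 0 δ, ENNReal.ofReal (u ^ p) = ENNReal.ofReal (δ ^ (p + 1) / (p + 1)) := by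
  have hint : IntegrableOn (fun u : ℝ ↦ u ^ p) (Ioc 0 δ) :=
    (intervalIntegrable_iff_integrableOn_Ioc_of_le hδ).1
      (intervalIntegral.intervalIntegrable_rpow' hp)
  rw [← ofReal_integral_eq_lintegral_ofReal hint
    (ae_restrict_of_forall_mem measurableSet_Ioc fun u hu ↦ rpow_nonneg hu.1.le p),
    ← intervalIntegral.integral_of_le hδ, integral_rpow (Or.inl hp),
    zero_rpow (by linarith), sub_zero]

theorem lintegral_Ioi_rpow_of_lt {a c : ℝ} (ha : a < -1) (hc : 0 < c) :
    ∫⁻ x in Ioi c, ENNReal.ofReal (x ^ a) = ENNReal.ofReal (-c ^ (a + 1) / (a + 1)) := by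
  rw [← ofReal_integral_eq_lintegral_ofReal (integrableOn_Ioi_rpow_of_lt ha hc)
    (ae_restrict_of_forall_mem measurableSet_Ioi fun x hx ↦ rpow_nonneg (hc.trans hx).le a),
    integral_Ioi_rpow_of_lt ha hc]

noncomputable def kernelMajorant (α β δ : ℝ) : ℝ → ENNReal :=
  (Ioc 0 δ).indicator (fun u ↦ ENNReal.ofReal (u ^ (α + β))) +
    (Ioi δ).indicator (fun u ↦ ENNReal.ofReal (-β * δ * u ^ (α + β - 1)))

theorem ofReal_posPow_mul_abs_le_kernelMajorant {α β r t : ℝ} (hβ : β ≤ 0) (hrt : r ≤ t)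
    (s : ℝ) :
    ENNReal.ofReal (posPow (r - s) α * |(t - s) ^ β - posPow (r - s) β|) ≤
      kernelMajorant α β (t - r) (r - s) := by
  unfold posPow
  split_ifs with hu
  swap
  · simp
  have hut : r - s ≤ t - s := by linarith
  have hpow_nonneg := rpow_nonneg hu.le α
  rw [kernelMajorant, Pi.add_apply]
  rcases le_or_gt (r - s) (t - r) with hnear | hfar
  · rw [indicator_of_mem (show r - s ∈ Ioc 0 (t - r) from ⟨hu, hnear⟩)]
    refine le_add_right (ENNReal.ofReal_le_ofReal ?_)
    calc (r - s) ^ α * |(t - s) ^ β - (r - s) ^ β| ≤ (r - s) ^ α * (r - s) ^ β :=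
          mul_le_mul_of_nonneg_left (abs_rpow_sub_rpow_le_rpow hu hut hβ) hpow_nonneg
      _ = (r - s) ^ (α + β) := (rpow_add hu α β).symm
  · rw [indicator_of_mem (show r - s ∈ Ioi (t - r) from hfar)]
    refine le_add_left (ENNReal.ofReal_le_ofReal ?_)
    calc (r - s) ^ α * |(t - s) ^ β - (r - s) ^ β|
        ≤ (r - s) ^ α * (-β * ((t - s) - (r - s)) * (r - s) ^ (β - 1)) :=
          mul_le_mul_of_nonneg_left (abs_rpow_sub_rpow_le_mul hu hut hβ) hpow_nonneg
      _ = -β * (t - r) * (r - s) ^ (α + β - 1) := by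
          rw [add_sub_assoc, rpow_add hu]; ring

theorem lintegral_kernelMajorant {α β δ : ℝ} (hβ : β ≤ 0) (hp₁ : -1 < α + β) (hp₀ : α + β < 0)
    (hδ : 0 ≤ δ) :
    ∫⁻ u, kernelMajorant α β δ u =
      ENNReal.ofReal ((1 / (α + β + 1) + β / (α + β)) * δ ^ (α + β + 1)) := by
  have hfar : ∫⁻ u in Ioi δ, ENNReal.ofReal (-β * δ * u ^ (α + β - 1)) =
      ENNReal.ofReal (β / (α + β) * δ ^ (α + β + 1)) := by
    rcases hδ.eq_or_lt with rfl | hδ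
    · simp [zero_rpow (show α + β + 1 ≠ 0 by linarith)]
    simp_rw [ENNReal.ofReal_mul (mul_nonneg (neg_nonneg.2 hβ) hδ.le)]
    rw [lintegral_const_mul _ (by fun_prop), lintegral_Ioi_rpow_of_lt (by linarith) hδ,
      ← ENNReal.ofReal_mul (mul_nonneg (neg_nonneg.2 hβ) hδ.le), sub_add_cancel,
      rpow_add_one hδ.ne']
    congr 1
    field_simp
  simp only [kernelMajorant, Pi.add_apply]
  rw [lintegral_add_left (Measurable.indicator (by fun_prop) measurableSet_Ioc),
    lintegral_indicator measurableSet_Ioc, lintegral_indicator measurableSet_Ioi,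
    lintegral_Ioc_rpow hp₁ hδ, hfar,
    ← ENNReal.ofReal_add (div_nonneg (rpow_nonneg hδ _) (by linarith))
      (mul_nonneg (div_nonneg_of_nonpos hβ hp₀.le) (rpow_nonneg hδ _))]
  ring_nf

theorem lintegral_posPow_mul_abs_sub_le {α β r t : ℝ} (hβ : β ≤ 0) (hp₁ : -1 < α + β)
    (hp₀ : α + β < 0) (hrt : r ≤ t) :
    ∫⁻ s, ENNReal.ofReal (posPow (r - s) α * |(t - s) ^ β - posPow (r - s) β|) ≤
      ENNReal.ofReal ((1 / (α + β + 1) + β / (α + β)) * (t - r) ^ (α + β + 1)) :=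
  calc _ ≤ ∫⁻ s, kernelMajorant α β (t - r) (r - s) :=
        lintegral_mono (ofReal_posPow_mul_abs_le_kernelMajorant hβ hrt)
    _ = ∫⁻ u, kernelMajorant α β (t - r) u := lintegral_sub_left_eq_self _ r
    _ = _ := lintegral_kernelMajorant hβ hp₁ hp₀ (sub_nonneg.2 hrt)

theorem floor_mul_div_le {x : ℝ} (hx : 0 < x) (t : ℝ) : (⌊x * t⌋ : ℝ) / x ≤ t := by
  rw [div_le_iff₀ hx, mul_comm]
  exact Int.floor_le _

theorem sub_floor_mul_div_le {x : ℝ} (hx : 0 < x) (t : ℝ) : t - (⌊x * t⌋ : ℝ) / x ≤ x⁻¹ := by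
  have := Int.lt_floor_add_one (x * t)
  rw [sub_le_iff_le_add, inv_eq_one_div, ← add_div, le_div_iff₀ hx]
  linarith

/-- Second half of Lemma 1:
`∫₀¹∫₀ᵗ (⌊nt⌋/n - s)_+^α |k_n(s,t)| ds dt ≤ C n^{-α-H-1/2}`. -/
theorem lemma1_second (H α : ℝ) (hH : H ∈ Ioo (0 : ℝ) (1/2))
    (hα : α ∈ Ioo (-(1/2) - H) (1/2 - H)) :
    ∃ C : ℝ, 0 < C ∧ ∀ n : ℕ, 0 < n →
      (∫⁻ t in Ioc (0 : ℝ) 1, ∫⁻ s in Ioc (0 : ℝ) t,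
          ENNReal.ofReal (posPow ((⌊(n : ℝ) * t⌋ : ℝ) / n - s) α * |kn H n s t|))
        ≤ ENNReal.ofReal (C * (n : ℝ) ^ (-α - H - 1/2)) := by
  obtain ⟨-, hH⟩ := hH
  obtain ⟨hα₀, hα₁⟩ := hα
  have hβ : H - 1/2 ≤ 0 := by linarith
  have hp₁ : -1 < α + (H - 1/2) := by linarith
  have hp₀ : α + (H - 1/2) < 0 := by linarith
  set C := 1 / (α + (H - 1/2) + 1) + (H - 1/2) / (α + (H - 1/2))
  have hC : 0 < C := add_pos_of_pos_of_nonneg (one_div_pos.2 (by linarith))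
    (div_nonneg_of_nonpos hβ hp₀.le)
  refine ⟨C, hC, fun n hn ↦ ?_⟩
  have hn : (0 : ℝ) < n := Nat.cast_pos.2 hn
  have hinner : ∀ t, ∫⁻ s in Ioc (0 : ℝ) t,
      ENNReal.ofReal (posPow ((⌊(n : ℝ) * t⌋ : ℝ) / n - s) α * |kn H n s t|) ≤
        ENNReal.ofReal (C * (n : ℝ) ^ (-α - H - 1/2)) := fun t ↦
    calc _ ≤ _ := setLIntegral_le_lintegral _ _
      _ ≤ ENNReal.ofReal (C * (t - ⌊(n : ℝ) * t⌋ / n) ^ (α + (H - 1/2) + 1)) :=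
        lintegral_posPow_mul_abs_sub_le hβ hp₁ hp₀ (floor_mul_div_le hn t)
      _ ≤ ENNReal.ofReal (C * (n : ℝ)⁻¹ ^ (α + (H - 1/2) + 1)) := by
        gcongr
        · exact sub_nonneg.2 (floor_mul_div_le hn t)
        · linarith
        · exact sub_floor_mul_div_le hn t
      _ = ENNReal.ofReal (C * (n : ℝ) ^ (-α - H - 1/2)) := by
        rw [inv_rpow hn.le, ← rpow_neg hn.le]
        ring_nf
  calc _ ≤ ∫⁻ _ in Ioc (0 : ℝ) 1, ENNReal.ofReal (C * (n : ℝ) ^ (-α - H - 1/2)) :=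
        lintegral_mono hinner
    _ = _ := by simp
end

section
/- Let H ∈ (0,1/2) and α < 1/2 − H. Then ∫₂^∞ u^α |u^{H−1/2} − (u−1)^{H−1/2}| du ≤ 2^{1+α} / ((1/2 − H)(1/2 − α − H)). -/
open MeasureTheory Real Set

/-!
By the mean value theorem, for `q ≤ 1` and `u ≥ 2`,
`|u^q - (u-1)^q| ≤ |q| (u-1)^(q-1) ≤ |q| 2^(1-q) u^(q-1)`, so the integrand is dominated
by `|q| 2^(1-q) u^(α+q-1)`, whose integral over `(2, ∞)` is `|q| 2^(1+α) / -(α+q)` when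
`α + q < 0`.
For `q = H - 1/2` this is `(1/2-H) 2^(1+α) / (1/2-α-H)`, and `(1/2-H)^2 ≤ 1` gives the claim.
-/

theorem abs_rpow_sub_rpow_sub_one_le {q u : ℝ} (hq : q ≤ 1) (hu : 1 < u) :
    |u ^ q - (u - 1) ^ q| ≤ |q| * (u - 1) ^ (q - 1) := by
  have hu1 : 0 < u - 1 := by linarith
  have hne : ∀ x ∈ Icc (u - 1) u, x ≠ 0 := fun x hx => (hu1.trans_le hx.1).ne'
  obtain ⟨c, ⟨hc1, -⟩, hc⟩ := exists_hasDerivAt_eq_slope (fun x => x ^ q)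
    (fun x => q * x ^ (q - 1)) (sub_one_lt u)
    (fun x hx => (continuousAt_id.rpow_const (Or.inl (hne x hx))).continuousWithinAt)
    (fun x hx => hasDerivAt_rpow_const (Or.inl (hne x (Ioo_subset_Icc_self hx))))
  rw [sub_sub_cancel, div_one] at hc
  rw [← hc, abs_mul, abs_of_pos (rpow_pos_of_pos (hu1.trans hc1) _)]
  gcongr _ * ?_
  exact rpow_le_rpow_of_nonpos hu1 hc1.le (by linarith)

theorem sub_one_rpow_le_two_rpow_neg_mul {p u : ℝ} (hp : p ≤ 0) (hu : 2 ≤ u) :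
    (u - 1) ^ p ≤ 2 ^ (-p) * u ^ p := by
  calc (u - 1) ^ p ≤ (u / 2) ^ p := rpow_le_rpow_of_nonpos (by positivity) (by linarith) hp
    _ = 2 ^ (-p) * u ^ p := by
      rw [div_rpow (by linarith) zero_le_two, rpow_neg zero_le_two, div_eq_inv_mul]

theorem rpow_mul_abs_rpow_sub_rpow_sub_one_le {α q u : ℝ} (hq : q ≤ 1) (hu : 2 ≤ u) :
    u ^ α * |u ^ q - (u - 1) ^ q| ≤ |q| * 2 ^ (1 - q) * u ^ (α + q - 1) := by
  have hu0 : 0 < u := by linarith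
  calc u ^ α * |u ^ q - (u - 1) ^ q|
      ≤ u ^ α * (|q| * (2 ^ (1 - q) * u ^ (q - 1))) := by
        gcongr
        calc |u ^ q - (u - 1) ^ q| ≤ |q| * (u - 1) ^ (q - 1) :=
              abs_rpow_sub_rpow_sub_one_le hq (by linarith)
          _ ≤ |q| * (2 ^ (1 - q) * u ^ (q - 1)) := by
              gcongr
              simpa using sub_one_rpow_le_two_rpow_neg_mul (p := q - 1) (by linarith) hu
    _ = |q| * 2 ^ (1 - q) * u ^ (α + q - 1) := by
        rw [add_sub_assoc, rpow_add hu0]; ring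

theorem lintegral_Ioi_ofReal_const_mul_rpow {C p c : ℝ} (hC : 0 ≤ C) (hp : p < -1)
    (hc : 0 < c) :
    ∫⁻ u in Ioi c, ENNReal.ofReal (C * u ^ p)
      = ENNReal.ofReal (C * (-c ^ (p + 1) / (p + 1))) := by
  rw [← ofReal_integral_eq_lintegral_ofReal ((integrableOn_Ioi_rpow_of_lt hp hc).const_mul C),
    integral_const_mul, integral_Ioi_rpow_of_lt hp hc]
  filter_upwards [ae_restrict_mem measurableSet_Ioi] with u hu
  have : 0 < u := hc.trans hu
  positivity

theorem lintegral_Ioi_two_rpow_mul_abs_rpow_sub_rpow_sub_one_le {α q : ℝ} (hq : q ≤ 1)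
    (hαq : α + q < 0) :
    ∫⁻ u in Ioi (2 : ℝ), ENNReal.ofReal (u ^ α * |u ^ q - (u - 1) ^ q|)
      ≤ ENNReal.ofReal (|q| * 2 ^ (1 + α) / -(α + q)) := by
  calc ∫⁻ u in Ioi (2 : ℝ), ENNReal.ofReal (u ^ α * |u ^ q - (u - 1) ^ q|)
      ≤ ∫⁻ u in Ioi (2 : ℝ), ENNReal.ofReal (|q| * 2 ^ (1 - q) * u ^ (α + q - 1)) :=
        setLIntegral_mono' measurableSet_Ioi fun u hu => ENNReal.ofReal_le_ofReal <|
          rpow_mul_abs_rpow_sub_rpow_sub_one_le hq (le_of_lt hu)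
    _ = ENNReal.ofReal (|q| * 2 ^ (1 + α) / -(α + q)) := by
        rw [lintegral_Ioi_ofReal_const_mul_rpow (by positivity) (by linarith) two_pos,
          sub_add_cancel, mul_assoc, ← neg_div_neg_eq, neg_neg, mul_div_assoc',
          ← rpow_add two_pos]
        ring_nf

/-- Tail estimate: for `H ∈ (0,1/2)` and `α < 1/2 - H`,
`∫₂^∞ u^α |u^{H-1/2} - (u-1)^{H-1/2}| du ≤ 2^{1+α} / ((1/2-H)(1/2-α-H))`. -/
theorem tail_estimate (H α : ℝ) (hH : H ∈ Ioo (0 : ℝ) (1/2)) (hα : α < 1/2 - H) :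
    (∫⁻ u in Ioi (2 : ℝ),
        ENNReal.ofReal (u ^ α * |u ^ (H - 1/2) - (u - 1) ^ (H - 1/2)|))
      ≤ ENNReal.ofReal ((2 : ℝ) ^ (1 + α) / ((1/2 - H) * (1/2 - α - H))) := by
  obtain ⟨hH0, hH1⟩ := hH
  refine (lintegral_Ioi_two_rpow_mul_abs_rpow_sub_rpow_sub_one_le (by linarith)
    (by linarith)).trans (ENNReal.ofReal_le_ofReal ?_)
  rw [abs_of_neg (by linarith), neg_sub, show -(α + (H - 1/2)) = 1/2 - α - H by ring,
    mul_div_assoc, div_mul_eq_div_div_swap]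
  have hpos : 0 < 2 ^ (1 + α) / (1/2 - α - H) := by
    have : 0 < 1/2 - α - H := by linarith
    positivity
  rw [le_div_iff₀ (by linarith), mul_comm, ← mul_assoc]
  exact mul_le_of_le_one_left hpos.le (by nlinarith)
end
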